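/- For a slow-fading Gaussian channel with K positive fading states g_1 > ... > g_K > 0, probabilities p_k with cumulative sums F_k = p_1+...+p_k, n_k = 1/g_k, and dominating index sequence π_s < ... < π_w of active states (as determined by the marginal utility functions), the expected capacity over one-block delay equals C_exp = F_{π_s} log(F_{π_s}/n_{π_s}) + ∑_{m=s+1}^{w} (F_{π_m} - F_{π_{m-1}}) log((F_{π_m} - F_{π_{m-1}})/(n_{π_m} - n_{π_{m-1}})) + F_{π_w} log((n_{π_w}+1)/F_{π_w}). -/

import Mathlib

open Real

/-- Crossing point of the marginal utility functions `u_k` and `u_l`. -/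
noncomputable def zc (n F : ℕ → ℝ) (k l : ℕ) : ℝ :=
  (F k * n l - F l * n k) / (F l - F k)

/-- Achievable expected-rate values of the one-block power allocation
program: maximize `∑_k F_k log((1+β_k g_k)/(1+β_{k-1} g_k))` over
`0 = β_0 ≤ β_1 ≤ ⋯ ≤ β_K ≤ 1`. -/
def CexpSet (K : ℕ) (g F : ℕ → ℝ) : Set ℝ :=
  {r | ∃ β : ℕ → ℝ, β 0 = 0 ∧ (∀ k, 1 ≤ k → k ≤ K → β (k - 1) ≤ β k) ∧ β K ≤ 1 ∧
    r = ∑ k ∈ Finset.Icc 1 K,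
      F k * Real.log ((1 + β k * g k) / (1 + β (k - 1) * g k))}


/-!
Writing `n_k = 1 / g_k`, the objective is `∑ k, F_k (log (n_k + β_k) - log (n_k + β_{k-1}))`:
the integral over `t ∈ [0, 1]` of the marginal utility `u_k(t) = F_k / (n_k + t)` of the layer `k`
that holds the power level `t`. It is therefore bounded by the integral of the upper envelope
`max_k u_k`, and the allocation following the envelope attains the bound. Two curves `u_k`, `u_l`
cross exactly once, at `t = z_{k,l}`, so the envelope is `u_{σ_m}` on `[a_m, a_{m+1}]`, where
`a_m = z_{σ_{m-1}, σ_m}` clipped to `[0, 1]`; integrating it gives the closed form.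
-/

open Finset

section Crossing

variable {n F : ℕ → ℝ} {a b c k l : ℕ}

theorem mul_add_sub_mul_add_eq_mul_sub_zc (h : F k ≠ F l) (t : ℝ) :
    F l * (n k + t) - F k * (n l + t) = (F l - F k) * (t - zc n F k l) := by
  have : F l - F k ≠ 0 := sub_ne_zero.2 h.symm
  unfold zc
  field_simp
  ring

theorem zc_le_iff (h : F k < F l) {t : ℝ} :
    zc n F k l ≤ t ↔ F k * (n l + t) ≤ F l * (n k + t) := by
  rw [← sub_nonneg (b := F k * _), mul_add_sub_mul_add_eq_mul_sub_zc h.ne,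
    mul_nonneg_iff_of_pos_left (sub_pos.2 h), sub_nonneg]

theorem le_zc_iff (h : F k < F l) {t : ℝ} :
    t ≤ zc n F k l ↔ F l * (n k + t) ≤ F k * (n l + t) := by
  rw [← sub_nonneg, ← sub_nonneg (b := F l * _), ← mul_nonneg_iff_of_pos_left (sub_pos.2 h),
    show (F l - F k) * (zc n F k l - t) = F k * (n l + t) - F l * (n k + t) by
      linear_combination mul_add_sub_mul_add_eq_mul_sub_zc (n := n) h.ne t]

/-- For `F a < F b < F c`, the outer crossing point `zc a c` is a strict convex combination of
the left one `zc a b` and the right one `zc b c`. -/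
theorem zc_mediant (hab : F a ≠ F b) (hbc : F b ≠ F c) (hac : F a ≠ F c) :
    F b * (F c - F a) * zc n F a c =
      F c * (F b - F a) * zc n F a b + F a * (F c - F b) * zc n F b c := by
  have := sub_ne_zero.2 hab.symm
  have := sub_ne_zero.2 hbc.symm
  have := sub_ne_zero.2 hac.symm
  unfold zc
  field_simp
  ring

theorem zc_left_le_right_of_left_le_outer (ha : 0 < F a) (hab : F a < F b) (hbc : F b < F c)
    (h : zc n F a b ≤ zc n F a c) : zc n F a b ≤ zc n F b c := by
  refine le_of_mul_le_mul_left ?_ (mul_pos ha (sub_pos.2 hbc))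
  linear_combination zc_mediant (n := n) hab.ne hbc.ne (hab.trans hbc).ne +
    mul_le_mul_of_nonneg_left h (mul_pos (ha.trans hab) (sub_pos.2 (hab.trans hbc))).le

theorem zc_right_le_outer_of_outer_le_left (ha : 0 < F a) (hab : F a < F b) (hbc : F b < F c)
    (h : zc n F a c ≤ zc n F a b) : zc n F b c ≤ zc n F a c := by
  have hcb : zc n F b c ≤ zc n F a b := by
    refine le_of_mul_le_mul_left ?_ (mul_pos ha (sub_pos.2 hbc))
    linear_combination -zc_mediant (n := n) hab.ne hbc.ne (hab.trans hbc).ne +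
      mul_le_mul_of_nonneg_left h (mul_pos (ha.trans hab) (sub_pos.2 (hab.trans hbc))).le
  refine le_of_mul_le_mul_left ?_ (mul_pos (ha.trans hab) (sub_pos.2 (hab.trans hbc)))
  linear_combination -zc_mediant (n := n) hab.ne hbc.ne (hab.trans hbc).ne +
      mul_le_mul_of_nonneg_left hcb (mul_pos (ha.trans (hab.trans hbc)) (sub_pos.2 hab)).le

theorem zc_outer_le_right_of_left_le_right (ha : 0 < F a) (hab : F a < F b) (hbc : F b < F c)
    (h : zc n F a b ≤ zc n F b c) : zc n F a c ≤ zc n F b c := by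
  refine le_of_mul_le_mul_left ?_ (mul_pos (ha.trans hab) (sub_pos.2 (hab.trans hbc)))
  linear_combination zc_mediant (n := n) hab.ne hbc.ne (hab.trans hbc).ne +
      mul_le_mul_of_nonneg_left h (mul_pos (ha.trans (hab.trans hbc)) (sub_pos.2 hab)).le

end Crossing

structure IsOrderedProfile (n F : ℕ → ℝ) (K : ℕ) : Prop where
  F_pos : ∀ k ∈ Set.Icc 1 K, 0 < F k
  F_strictMonoOn : StrictMonoOn F (Set.Icc 1 K)
  n_pos : ∀ k ∈ Set.Icc 1 K, 0 < n k
  n_strictMonoOn : StrictMonoOn n (Set.Icc 1 K)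

theorem IsOrderedProfile.of_fading {K : ℕ} {g p F n : ℕ → ℝ}
    (hg : ∀ k l, 1 ≤ k → k < l → l ≤ K → g l < g k) (hgK : 0 < g K)
    (hp : ∀ k, 1 ≤ k → k ≤ K → 0 < p k) (hF : ∀ k, F k = ∑ j ∈ Icc 1 k, p j)
    (hn : ∀ k, n k = 1 / g k) : IsOrderedProfile n F K := by
  have hp' : ∀ k ∈ Set.Icc 1 K, ∀ j ∈ Icc 1 k, 0 < p j := fun k hk j hj =>
    hp j (mem_Icc.1 hj).1 ((mem_Icc.1 hj).2.trans hk.2)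
  have hg_pos : ∀ k ∈ Set.Icc 1 K, 0 < g k := fun k hk =>
    hk.2.eq_or_lt.elim (fun h => h ▸ hgK) (fun h => hgK.trans (hg k K hk.1 h le_rfl))
  refine ⟨fun k hk => ?_, fun k hk l hl hkl => ?_, fun k hk => ?_, fun k hk l hl hkl => ?_⟩
  · rw [hF]
    exact sum_pos (hp' k hk) ⟨k, mem_Icc.2 ⟨hk.1, le_rfl⟩⟩
  · rw [hF, hF]
    exact sum_lt_sum_of_subset (Icc_subset_Icc_right hkl.le) (right_mem_Icc.2 (hk.1.trans hkl.le))
      (by simp [hkl]) (hp' l hl l (right_mem_Icc.2 (hk.1.trans hkl.le)))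
      (fun j hj _ => (hp' l hl j hj).le)
  · rw [hn]
    exact one_div_pos.2 (hg_pos k hk)
  · rw [hn, hn]
    exact one_div_lt_one_div_of_lt (hg_pos l hl) (hg k l hk.1 hkl hl.2)

structure IsDominatingSequence (n F : ℕ → ℝ) (K I : ℕ) (σ : ℕ → ℕ) : Prop where
  first : σ 1 = 1
  last : σ I = K
  strictMonoOn : StrictMonoOn σ (Set.Icc 1 I)
  zc_succ_le : ∀ i, 1 ≤ i → i < I → ∀ l, σ i < l → l ≤ K →
    zc n F (σ i) (σ (i + 1)) ≤ zc n F (σ i) l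

noncomputable def crossing (n F : ℕ → ℝ) (σ : ℕ → ℕ) (m : ℕ) : ℝ :=
  zc n F (σ (m - 1)) (σ m)

namespace IsDominatingSequence

variable {n F : ℕ → ℝ} {K I : ℕ} {σ : ℕ → ℕ}

theorem mapsTo (hσ : IsDominatingSequence n F K I σ) :
    Set.MapsTo σ (Set.Icc 1 I) (Set.Icc 1 K) := fun _ hm =>
  ⟨hσ.first ▸ hσ.strictMonoOn.monotoneOn ⟨le_rfl, hm.1.trans hm.2⟩ hm hm.1,
    hσ.last ▸ hσ.strictMonoOn.monotoneOn hm ⟨hm.1.trans hm.2, le_rfl⟩ hm.2⟩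

theorem F_lt (hσ : IsDominatingSequence n F K I σ) (hP : IsOrderedProfile n F K) {i j : ℕ}
    (hi : i ∈ Set.Icc 1 I) (hj : j ∈ Set.Icc 1 I) (hij : i < j) : F (σ i) < F (σ j) :=
  hP.F_strictMonoOn (hσ.mapsTo hi) (hσ.mapsTo hj) (hσ.strictMonoOn hi hj hij)

theorem n_lt (hσ : IsDominatingSequence n F K I σ) (hP : IsOrderedProfile n F K) {i j : ℕ}
    (hi : i ∈ Set.Icc 1 I) (hj : j ∈ Set.Icc 1 I) (hij : i < j) : n (σ i) < n (σ j) :=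
  hP.n_strictMonoOn (hσ.mapsTo hi) (hσ.mapsTo hj) (hσ.strictMonoOn hi hj hij)

theorem F_pos (hσ : IsDominatingSequence n F K I σ) (hP : IsOrderedProfile n F K) {i : ℕ}
    (hi : i ∈ Set.Icc 1 I) : 0 < F (σ i) :=
  hP.F_pos _ (hσ.mapsTo hi)

theorem crossing_le_crossing_succ (hσ : IsDominatingSequence n F K I σ)
    (hP : IsOrderedProfile n F K) {m : ℕ} (hm : 2 ≤ m) (hmI : m < I) :
    crossing n F σ m ≤ crossing n F σ (m + 1) := by
  have h := hσ.zc_succ_le (m - 1) (by omega) (by omega) (σ (m + 1))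
    (hσ.strictMonoOn ⟨by omega, by omega⟩ ⟨by omega, by omega⟩ (by omega))
    (hσ.mapsTo ⟨by omega, hmI⟩).2
  rw [Nat.sub_add_cancel (by omega)] at h
  unfold crossing
  rw [Nat.add_sub_cancel]
  exact zc_left_le_right_of_left_le_outer (hσ.F_pos hP ⟨by omega, by omega⟩)
    (hσ.F_lt hP ⟨by omega, by omega⟩ ⟨by omega, by omega⟩ (by omega))
    (hσ.F_lt hP ⟨by omega, by omega⟩ ⟨by omega, hmI⟩ (by omega)) h

theorem crossing_mono (hσ : IsDominatingSequence n F K I σ) (hP : IsOrderedProfile n F K)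
    {i j : ℕ} (hi : 2 ≤ i) (hij : i ≤ j) (hj : j ≤ I) :
    crossing n F σ i ≤ crossing n F σ j := by
  induction j, hij using Nat.le_induction with
  | base => exact le_rfl
  | succ j hij ih =>
    exact (ih (by omega)).trans (hσ.crossing_le_crossing_succ hP (by omega) (by omega))

theorem zc_le_crossing_succ (hσ : IsDominatingSequence n F K I σ) (hP : IsOrderedProfile n F K)
    {i k : ℕ} (hi : 1 ≤ i) (hiI : i < I) (hik : σ i ≤ k) (hki : k < σ (i + 1)) :
    zc n F k (σ (i + 1)) ≤ crossing n F σ (i + 1) := by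
  unfold crossing
  rw [Nat.add_sub_cancel]
  obtain rfl | hik := hik.eq_or_lt
  · exact le_rfl
  have hkK : k ≤ K := hki.le.trans (hσ.mapsTo ⟨by omega, hiI⟩).2
  have hFk : F k < F (σ (i + 1)) :=
    hP.F_strictMonoOn ⟨by omega, hkK⟩ (hσ.mapsTo ⟨by omega, hiI⟩) hki
  exact zc_right_le_outer_of_outer_le_left (hσ.F_pos hP ⟨hi, hiI.le⟩)
    (hP.F_strictMonoOn (hσ.mapsTo ⟨hi, hiI.le⟩) ⟨by omega, hkK⟩ hik) hFk
    (hσ.zc_succ_le i hi hiI k hik hkK)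

theorem zc_le_crossing (hσ : IsDominatingSequence n F K I σ) (hP : IsOrderedProfile n F K)
    {m k : ℕ} (hm : 2 ≤ m) (hmI : m ≤ I) (hk : 1 ≤ k) (hkm : k < σ m) :
    zc n F k (σ m) ≤ crossing n F σ m := by
  induction m, hm using Nat.le_induction generalizing k with
  | base => exact hσ.zc_le_crossing_succ hP le_rfl hmI (by rwa [hσ.first]) hkm
  | succ m hm ih =>
    obtain hmk | hkm' := le_or_gt (σ m) k
    · exact hσ.zc_le_crossing_succ hP (by omega) hmI hmk hkm
    have hkK : k ∈ Set.Icc 1 K := ⟨hk, hkm'.le.trans (hσ.mapsTo ⟨by omega, by omega⟩).2⟩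
    have hFk : F k < F (σ m) := hP.F_strictMonoOn hkK (hσ.mapsTo ⟨by omega, by omega⟩) hkm'
    have h := (ih (by omega) hk hkm').trans (hσ.crossing_le_crossing_succ hP hm hmI)
    unfold crossing at h ⊢
    rw [Nat.add_sub_cancel] at h ⊢
    exact zc_outer_le_right_of_left_le_right (hP.F_pos k hkK) hFk
      (hσ.F_lt hP ⟨by omega, by omega⟩ ⟨by omega, hmI⟩ (by omega)) h

/-- `u_k(t) ≤ u_{σ m}(t)` for the marginal utilities `u_k(t) = F k / (n k + t)`,
cross-multiplied. -/
theorem dominates (hσ : IsDominatingSequence n F K I σ) (hP : IsOrderedProfile n F K)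
    {m : ℕ} {t : ℝ} (hm : m ∈ Set.Icc 1 I) (hlow : 2 ≤ m → crossing n F σ m ≤ t)
    (hhigh : m < I → t ≤ crossing n F σ (m + 1)) {k : ℕ} (hk : k ∈ Set.Icc 1 K) :
    F k * (n (σ m) + t) ≤ F (σ m) * (n k + t) := by
  obtain hkm | rfl | hmk := lt_trichotomy k (σ m)
  · have hm2 : 2 ≤ m := by
      by_contra h
      obtain rfl : m = 1 := by have := hm.1; omega
      have := hk.1
      rw [hσ.first] at hkm
      omega
    exact (zc_le_iff (hP.F_strictMonoOn hk (hσ.mapsTo hm) hkm)).1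
      ((hσ.zc_le_crossing hP hm2 hm.2 hk.1 hkm).trans (hlow hm2))
  · exact le_rfl
  · have hmI : m < I := by
      refine hm.2.lt_of_ne fun hmI => ?_
      have := hk.2
      rw [hmI, hσ.last] at hmk
      omega
    have h := hσ.zc_succ_le m hm.1 hmI k hmk hk.2
    unfold crossing at hhigh
    rw [Nat.add_sub_cancel] at hhigh
    exact (le_zc_iff (hP.F_strictMonoOn (hσ.mapsTo hm) hk hmk)).1 ((hhigh hmI).trans h)

end IsDominatingSequence

theorem monotoneOn_mul_log_add_sub_mul_log_add {c₁ c₂ C₁ C₂ x y : ℝ} (h₁ : 0 < C₁ + x)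
    (h₂ : 0 < C₂ + x) (hdom : ∀ t ∈ Set.Icc x y, c₂ * (C₁ + t) ≤ c₁ * (C₂ + t)) :
    MonotoneOn (fun t => c₁ * log (C₁ + t) - c₂ * log (C₂ + t)) (Set.Icc x y) := by
  have hpos : ∀ t ∈ Set.Icc x y, 0 < C₁ + t ∧ 0 < C₂ + t := fun t ht =>
    ⟨by linarith [ht.1], by linarith [ht.1]⟩
  have hderiv : ∀ t ∈ Set.Icc x y, HasDerivAt (fun t => c₁ * log (C₁ + t) - c₂ * log (C₂ + t))
      (c₁ * (1 / (C₁ + t)) - c₂ * (1 / (C₂ + t))) t := by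
    intro t ht
    have hlog : ∀ C, 0 < C + t → HasDerivAt (fun t => log (C + t)) (1 / (C + t)) t := fun C hC => by
      simpa using ((hasDerivAt_id t).const_add C).log hC.ne'
    exact ((hlog C₁ (hpos t ht).1).const_mul c₁).sub ((hlog C₂ (hpos t ht).2).const_mul c₂)
  refine monotoneOn_of_hasDerivWithinAt_nonneg (convex_Icc x y)
    (fun t ht => (hderiv t ht).continuousAt.continuousWithinAt)
    (fun t ht => (hderiv t (interior_subset ht)).hasDerivWithinAt) fun t ht => ?_
  obtain ⟨p₁, p₂⟩ := hpos t (interior_subset ht)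
  rw [sub_nonneg, mul_one_div, mul_one_div, div_le_div_iff₀ p₂ p₁]
  exact hdom t (interior_subset ht)

theorem monotoneOn_mul_log_add {c C x y : ℝ} (hc : 0 ≤ c) (hx : 0 < C + x) :
    MonotoneOn (fun t => c * log (C + t)) (Set.Icc x y) := fun _ ht _ _ hts =>
  mul_le_mul_of_nonneg_left (log_le_log (by linarith [ht.1]) (by linarith)) hc

theorem sum_Icc_sub_pred (f : ℕ → ℝ) (K : ℕ) :
    ∑ k ∈ Icc 1 K, (f k - f (k - 1)) = f K - f 0 := by
  induction K with
  | zero => simp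
  | succ K ih =>
    rw [sum_Icc_succ_top (by omega), ih, Nat.add_sub_cancel]
    ring

theorem sum_Icc_sub_diag (f : ℕ → ℕ → ℝ) {s w : ℕ} (hsw : s ≤ w) :
    ∑ m ∈ Icc s w, (f m (m + 1) - f m m) =
      f w (w + 1) - f s s + ∑ m ∈ Icc (s + 1) w, (f (m - 1) m - f m m) := by
  induction w, hsw using Nat.le_induction with
  | base => simp
  | succ w hsw ih =>
    rw [sum_Icc_succ_top (by omega), ih, sum_Icc_succ_top (by omega), Nat.add_sub_cancel]
    ring

theorem monotoneOn_Iic_of_pred_le {β : ℕ → ℝ} {K : ℕ}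
    (h : ∀ k, 1 ≤ k → k ≤ K → β (k - 1) ≤ β k) : MonotoneOn β (Set.Iic K) := by
  intro i _ j hj hij
  induction j, hij using Nat.le_induction with
  | base => exact le_rfl
  | succ j hij ih =>
    have hj : j + 1 ≤ K := hj
    exact (ih (show j ≤ K by omega)).trans (by simpa using h (j + 1) (by omega) hj)

theorem sum_clamp_sub {a : ℕ → ℝ} (ha : Monotone a) (f : ℝ → ℝ) {s w : ℕ} (hsw : s ≤ w)
    {y : ℝ} (hs : a s ≤ y) (hw : y ≤ a (w + 1)) :
    ∑ m ∈ Icc s w, (f (max (a m) (min y (a (m + 1)))) - f (a m)) = f y - f (a s) := by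
  have hpiece : ∀ m, f (max (a m) (min y (a (m + 1)))) - f (a m) =
      f (min y (a (m + 1))) - f (min y (a m)) := fun m => by
    obtain h | h := le_or_gt (a m) y
    · rw [max_eq_right (le_min h (ha m.le_succ)), min_eq_right h]
    · rw [min_eq_left (h.le.trans (ha m.le_succ)), max_eq_left h.le, min_eq_left h.le, sub_self,
        sub_self]
  rw [sum_congr rfl fun m _ => hpiece m, sum_Icc_sub hsw (fun m => f (min y (a m))),
    min_eq_left hw, min_eq_right hs]

/-- Split each increment of `Φ k` along the pieces `[a m, a (m + 1)]`, compare it there with the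
increment of `Φ (j m)`, and telescope over `k`. -/
theorem sum_sub_le_sum_sub_of_monotoneOn {a : ℕ → ℝ} (ha : Monotone a) {s w K : ℕ}
    (hsw : s ≤ w) {Φ : ℕ → ℝ → ℝ} {j : ℕ → ℕ} {β : ℕ → ℝ}
    (hβ : ∀ k, 1 ≤ k → k ≤ K → β (k - 1) ≤ β k) (hβ0 : a s ≤ β 0) (hβK : β K ≤ a (w + 1))
    (hj : ∀ m ∈ Icc s w, MonotoneOn (Φ (j m)) (Set.Icc (a m) (a (m + 1))))
    (hdom : ∀ m ∈ Icc s w, ∀ k ∈ Icc 1 K,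
      MonotoneOn (fun t => Φ (j m) t - Φ k t) (Set.Icc (a m) (a (m + 1)))) :
    ∑ k ∈ Icc 1 K, (Φ k (β k) - Φ k (β (k - 1))) ≤
      ∑ m ∈ Icc s w, (Φ (j m) (a (m + 1)) - Φ (j m) (a m)) := by
  set c : ℕ → ℝ → ℝ := fun m y => max (a m) (min y (a (m + 1)))
  have hc_mem : ∀ m y, c m y ∈ Set.Icc (a m) (a (m + 1)) := fun m _ =>
    ⟨le_max_left _ _, max_le (ha m.le_succ) (min_le_right _ _)⟩
  have hc_mono : ∀ m, Monotone (c m) := fun _ _ _ h => max_le_max le_rfl (min_le_min_right _ h)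
  have hβmono := monotoneOn_Iic_of_pred_le hβ
  have hβmem : ∀ k ≤ K, a s ≤ β k ∧ β k ≤ a (w + 1) := fun k hk =>
    ⟨hβ0.trans (hβmono (Nat.zero_le K) hk (Nat.zero_le k)), (hβmono hk (le_refl K) hk).trans hβK⟩
  have hsplit : ∀ (f : ℝ → ℝ) k k', k ≤ K → k' ≤ K →
      f (β k) - f (β k') = ∑ m ∈ Icc s w, (f (c m (β k)) - f (c m (β k'))) := by
    intro f k k' hk hk'
    rw [← sub_sub_sub_cancel_right _ _ (f (a s)), ← sum_clamp_sub ha f hsw (hβmem k hk).1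
      (hβmem k hk).2, ← sum_clamp_sub ha f hsw (hβmem k' hk').1 (hβmem k' hk').2,
      ← sum_sub_distrib]
    exact sum_congr rfl fun m _ => sub_sub_sub_cancel_right _ _ _
  calc ∑ k ∈ Icc 1 K, (Φ k (β k) - Φ k (β (k - 1)))
      = ∑ k ∈ Icc 1 K, ∑ m ∈ Icc s w, (Φ k (c m (β k)) - Φ k (c m (β (k - 1)))) :=
        sum_congr rfl fun k hk => hsplit _ _ _ (mem_Icc.1 hk).2 (by have := (mem_Icc.1 hk).2; omega)
    _ ≤ ∑ k ∈ Icc 1 K, ∑ m ∈ Icc s w, (Φ (j m) (c m (β k)) - Φ (j m) (c m (β (k - 1)))) := by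
        refine sum_le_sum fun k hk => sum_le_sum fun m hm => ?_
        have := hdom m hm k hk (hc_mem m _) (hc_mem m _)
          (hc_mono m (hβ k (mem_Icc.1 hk).1 (mem_Icc.1 hk).2))
        simp only at this
        linarith
    _ = ∑ m ∈ Icc s w, (Φ (j m) (c m (β K)) - Φ (j m) (c m (β 0))) := by
        rw [sum_comm]
        exact sum_congr rfl fun m _ => sum_Icc_sub_pred (fun k => Φ (j m) (c m (β k))) K
    _ ≤ ∑ m ∈ Icc s w, (Φ (j m) (a (m + 1)) - Φ (j m) (a m)) :=
        sum_le_sum fun m hm => sub_le_sub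
          (hj m hm (hc_mem m _) (Set.right_mem_Icc.2 (ha m.le_succ)) (hc_mem m _).2)
          (hj m hm (Set.left_mem_Icc.2 (ha m.le_succ)) (hc_mem m _) (hc_mem m _).1)

/-- The counting function `k ↦ #{m | σ m ≤ k}` of a strictly monotone `σ` only jumps at the
points `σ m`, from `m - 1` to `m`. -/
theorem sum_sub_card_filter {σ : ℕ → ℕ} {I K : ℕ} (hσ : StrictMonoOn σ (Set.Icc 1 I))
    (hmaps : Set.MapsTo σ (Set.Icc 1 I) (Set.Icc 1 K)) (f : ℕ → ℕ → ℝ) :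
    ∑ k ∈ Icc 1 K, (f k #{m ∈ Icc 1 I | σ m ≤ k} - f k #{m ∈ Icc 1 I | σ m ≤ k - 1}) =
      ∑ m ∈ Icc 1 I, (f (σ m) m - f (σ m) (m - 1)) := by
  have hcard : ∀ m ∈ Icc 1 I, #{m' ∈ Icc 1 I | σ m' ≤ σ m} = m ∧
      #{m' ∈ Icc 1 I | σ m' ≤ σ m - 1} = m - 1 := by
    intro m hm
    have hσm : 1 ≤ σ m := (hmaps (mem_Icc.1 hm)).1
    have h₁ : {m' ∈ Icc 1 I | σ m' ≤ σ m} = Icc 1 m := by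
      ext m'
      simp only [mem_filter, mem_Icc]
      exact ⟨fun h => ⟨h.1.1, (hσ.le_iff_le h.1 (mem_Icc.1 hm)).1 h.2⟩,
        fun h => ⟨⟨h.1, h.2.trans (mem_Icc.1 hm).2⟩,
          (hσ.le_iff_le ⟨h.1, h.2.trans (mem_Icc.1 hm).2⟩ (mem_Icc.1 hm)).2 h.2⟩⟩
    have h₂ : {m' ∈ Icc 1 I | σ m' ≤ σ m - 1} = Ico 1 m := by
      ext m'
      simp only [mem_filter, mem_Icc, mem_Ico, Nat.le_sub_one_iff_lt hσm]
      exact ⟨fun h => ⟨h.1.1, (hσ.lt_iff_lt h.1 (mem_Icc.1 hm)).1 h.2⟩,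
        fun h => ⟨⟨h.1, h.2.le.trans (mem_Icc.1 hm).2⟩,
          (hσ.lt_iff_lt ⟨h.1, h.2.le.trans (mem_Icc.1 hm).2⟩ (mem_Icc.1 hm)).2 h.2⟩⟩
    simp [h₁, h₂]
  have hoff : ∀ k ∈ Icc 1 K, k ∉ (Icc 1 I).image σ →
      #{m ∈ Icc 1 I | σ m ≤ k} = #{m ∈ Icc 1 I | σ m ≤ k - 1} := by
    intro k hk hk'
    refine congrArg card (filter_congr fun m hm => ?_)
    have : σ m ≠ k := fun h => hk' (mem_image.2 ⟨m, hm, h⟩)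
    have := (mem_Icc.1 hk).1
    omega
  rw [← sum_subset (image_subset_iff.2 fun m hm => mem_Icc.2 (hmaps (mem_Icc.1 hm)))
      fun k hk hk' => by rw [hoff k hk hk', sub_self],
    sum_image (by rw [coe_Icc]; exact hσ.injOn)]
  exact sum_congr rfl fun m hm => by rw [(hcard m hm).1, (hcard m hm).2]

theorem mul_log_add_zc_sub {n F : ℕ → ℝ} {k l : ℕ} (hk : 0 < F k) (hFkl : F k < F l)
    (hnkl : n k < n l) :
    F k * (log (n k + zc n F k l) - log (F k)) - F l * (log (n l + zc n F k l) - log (F l)) =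
      (F l - F k) * log ((F l - F k) / (n l - n k)) := by
  have hF : F l - F k ≠ 0 := (sub_pos.2 hFkl).ne'
  have hq : 0 < (n l - n k) / (F l - F k) := div_pos (sub_pos.2 hnkl) (sub_pos.2 hFkl)
  have hk' : n k + zc n F k l = F k * ((n l - n k) / (F l - F k)) := by
    unfold zc; field_simp; ring
  have hl' : n l + zc n F k l = F l * ((n l - n k) / (F l - F k)) := by
    unfold zc; field_simp; ring
  rw [hk', hl', log_mul hk.ne' hq.ne', log_mul (hk.trans hFkl).ne' hq.ne', ← inv_div, log_inv]
  ring

theorem sum_mul_log_sub_eq {P N a : ℕ → ℝ} {s w : ℕ} (hsw : s ≤ w)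
    (hP : ∀ m ∈ Icc s w, 0 < P m) (hN : ∀ m ∈ Icc s w, 0 < N m)
    (hP_lt : ∀ m ∈ Icc (s + 1) w, P (m - 1) < P m) (hN_lt : ∀ m ∈ Icc (s + 1) w, N (m - 1) < N m)
    (has : a s = 0) (haw : a (w + 1) = 1) (ha : ∀ m ∈ Icc (s + 1) w, a m = zc N P (m - 1) m) :
    ∑ m ∈ Icc s w, (P m * log (N m + a (m + 1)) - P m * log (N m + a m)) =
      P s * log (P s / N s) +
      ∑ m ∈ Icc (s + 1) w, (P m - P (m - 1)) * log ((P m - P (m - 1)) / (N m - N (m - 1))) +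
      P w * log ((N w + 1) / P w) := by
  refine (sum_congr rfl fun m _ => ?_).trans
    ((sum_Icc_sub_diag (fun m j => P m * (log (N m + a j) - log (P m))) hsw).trans ?_)
  · ring
  have hstep : ∀ m ∈ Icc (s + 1) w,
      P (m - 1) * (log (N (m - 1) + a m) - log (P (m - 1))) - P m * (log (N m + a m) - log (P m)) =
        (P m - P (m - 1)) * log ((P m - P (m - 1)) / (N m - N (m - 1))) := fun m hm => by
    rw [ha m hm]
    have hm' : m - 1 ∈ Icc s w := by
      simp only [mem_Icc] at hm ⊢
      omega
    exact mul_log_add_zc_sub (hP _ hm') (hP_lt m hm) (hN_lt m hm)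
  rw [sum_congr rfl hstep]
  have hs : s ∈ Icc s w := left_mem_Icc.2 hsw
  have hw : w ∈ Icc s w := right_mem_Icc.2 hsw
  rw [has, haw, add_zero, log_div (hP s hs).ne' (hN s hs).ne',
    log_div (by linarith [hN w hw]) (hP w hw).ne']
  ring

theorem sum_mul_log_div_eq {K : ℕ} {g n F β : ℕ → ℝ} (hn_pos : ∀ k ∈ Set.Icc 1 K, 0 < n k)
    (hn : ∀ k, n k = 1 / g k) (hβ : ∀ k ≤ K, 0 ≤ β k) :
    ∑ k ∈ Icc 1 K, F k * log ((1 + β k * g k) / (1 + β (k - 1) * g k)) =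
      ∑ k ∈ Icc 1 K, (F k * log (n k + β k) - F k * log (n k + β (k - 1))) := by
  refine sum_congr rfl fun k hk => ?_
  obtain ⟨hk1, hkK⟩ := mem_Icc.1 hk
  have hnk := hn_pos k ⟨hk1, hkK⟩
  have hg : g k = 1 / n k := by rw [hn, one_div_one_div]
  have h₁ : 0 < n k + β k := by linarith [hβ k hkK]
  have h₂ : 0 < n k + β (k - 1) := by linarith [hβ (k - 1) (by omega)]
  rw [hg, show (1 + β k * (1 / n k)) / (1 + β (k - 1) * (1 / n k)) =
      (n k + β k) / (n k + β (k - 1)) by field_simp, log_div h₁.ne' h₂.ne', mul_sub]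

/-- `a_m`: on `[a_m, a_{m+1}]` the state `σ m` has the largest marginal utility, so the optimal
allocation puts this range of power into the layer of `σ m`. -/
noncomputable def level (n F : ℕ → ℝ) (σ : ℕ → ℕ) (s w m : ℕ) : ℝ :=
  if m ≤ s then 0 else if w < m then 1 else crossing n F σ m

structure IsActiveRange (n F : ℕ → ℝ) (I : ℕ) (σ : ℕ → ℕ) (s w : ℕ) : Prop where
  one_le_s : 1 ≤ s
  s_le : s ≤ I
  one_le_w : 1 ≤ w
  w_le : w ≤ I
  crossing_s : s = 1 ∨ crossing n F σ s ≤ 0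
  crossing_pos : ∀ i, s < i → i ≤ I → 0 < crossing n F σ i
  crossing_w : w = 1 ∨ crossing n F σ w < 1
  one_le_crossing : ∀ i, w < i → i ≤ I → 1 ≤ crossing n F σ i

namespace IsActiveRange

variable {n F : ℕ → ℝ} {K I s w : ℕ} {σ : ℕ → ℕ}

theorem s_le_w (h : IsActiveRange n F I σ s w) : s ≤ w := by
  by_contra! hws
  have := h.one_le_crossing s hws h.s_le
  obtain hs | hs := h.crossing_s
  · have := h.one_le_w
    omega
  · linarith

theorem crossing_mem_Ioo (h : IsActiveRange n F I σ s w) (hσ : IsDominatingSequence n F K I σ)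
    (hP : IsOrderedProfile n F K) {m : ℕ} (hsm : s < m) (hmw : m ≤ w) :
    crossing n F σ m ∈ Set.Ioo 0 1 := by
  have := h.one_le_s
  exact ⟨h.crossing_pos m hsm (hmw.trans h.w_le),
    (hσ.crossing_mono hP (by omega) hmw h.w_le).trans_lt (h.crossing_w.resolve_left (by omega))⟩

theorem level_mono (h : IsActiveRange n F I σ s w) (hσ : IsDominatingSequence n F K I σ)
    (hP : IsOrderedProfile n F K) : Monotone (level n F σ s w) := by
  refine monotone_nat_of_le_succ fun m => ?_
  have := h.one_le_s
  have := h.w_le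
  unfold level
  split_ifs <;> first
    | omega
    | exact le_rfl
    | exact zero_le_one
    | exact (h.crossing_mem_Ioo hσ hP (by omega) (by omega)).1.le
    | exact (h.crossing_mem_Ioo hσ hP (by omega) (by omega)).2.le
    | exact hσ.crossing_le_crossing_succ hP (by omega) (by omega)

theorem crossing_le_level (h : IsActiveRange n F I σ s w) {m : ℕ} (hm : m ∈ Icc s w)
    (h2 : 2 ≤ m) : crossing n F σ m ≤ level n F σ s w m := by
  obtain ⟨hsm, hmw⟩ := mem_Icc.1 hm
  unfold level
  split_ifs with hms hwm
  · obtain rfl : m = s := le_antisymm hms hsm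
    exact h.crossing_s.resolve_left (by omega)
  · omega
  · exact le_rfl

theorem level_succ_le_crossing (h : IsActiveRange n F I σ s w) {m : ℕ} (hm : m ∈ Icc s w)
    (hmI : m < I) : level n F σ s w (m + 1) ≤ crossing n F σ (m + 1) := by
  obtain ⟨hsm, hmw⟩ := mem_Icc.1 hm
  unfold level
  split_ifs with hms hwm
  · omega
  · exact h.one_le_crossing (m + 1) hwm hmI
  · exact le_rfl

variable {g : ℕ → ℝ}

theorem le_sum_of_mem_CexpSet (h : IsActiveRange n F I σ s w)
    (hσ : IsDominatingSequence n F K I σ) (hP : IsOrderedProfile n F K) (hn : ∀ k, n k = 1 / g k)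
    {r : ℝ} (hr : r ∈ CexpSet K g F) :
    r ≤ ∑ m ∈ Icc s w, (F (σ m) * log (n (σ m) + level n F σ s w (m + 1)) -
      F (σ m) * log (n (σ m) + level n F σ s w m)) := by
  obtain ⟨β, hβ0, hβ, hβK, rfl⟩ := hr
  have ha := h.level_mono hσ hP
  have hsw := h.s_le_w
  have has : level n F σ s w s = 0 := if_pos le_rfl
  have haw : level n F σ s w (w + 1) = 1 := by simp [level, show ¬w + 1 ≤ s by omega]
  have hβ_nonneg : ∀ k ≤ K, 0 ≤ β k := fun k hk =>
    hβ0 ▸ monotoneOn_Iic_of_pred_le hβ (Nat.zero_le K) hk (Nat.zero_le k)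
  have hmem : ∀ m ∈ Icc s w, m ∈ Set.Icc 1 I ∧ 0 ≤ level n F σ s w m := fun m hm => by
    obtain ⟨hsm, hmw⟩ := mem_Icc.1 hm
    exact ⟨⟨h.one_le_s.trans hsm, hmw.trans h.w_le⟩, has ▸ ha hsm⟩
  rw [sum_mul_log_div_eq hP.n_pos hn hβ_nonneg]
  refine sum_sub_le_sum_sub_of_monotoneOn ha hsw (Φ := fun k t => F k * log (n k + t)) (j := σ)
    hβ (by rw [has, hβ0]) (by rwa [haw]) (fun m hm => ?_) fun m hm k hk => ?_
  · exact monotoneOn_mul_log_add (hσ.F_pos hP (hmem m hm).1).le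
      (by linarith [hP.n_pos _ (hσ.mapsTo (hmem m hm).1), (hmem m hm).2])
  · exact monotoneOn_mul_log_add_sub_mul_log_add
      (by linarith [hP.n_pos _ (hσ.mapsTo (hmem m hm).1), (hmem m hm).2])
      (by linarith [hP.n_pos k (mem_Icc.1 hk), (hmem m hm).2]) fun t ht =>
      hσ.dominates hP (hmem m hm).1 (fun h2 => (h.crossing_le_level hm h2).trans ht.1)
        (fun hmI => ht.2.trans (h.level_succ_le_crossing hm hmI)) (mem_Icc.1 hk)

/-- The optimum is attained by giving the layers of the states `σ m` the powers
`a_{m+1} - a_m` and all other states none. -/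
theorem sum_mem_CexpSet (h : IsActiveRange n F I σ s w)
    (hσ : IsDominatingSequence n F K I σ) (hP : IsOrderedProfile n F K) (hn : ∀ k, n k = 1 / g k) :
    ∑ m ∈ Icc s w, (F (σ m) * log (n (σ m) + level n F σ s w (m + 1)) -
      F (σ m) * log (n (σ m) + level n F σ s w m)) ∈ CexpSet K g F := by
  have ha := h.level_mono hσ hP
  have hs := h.one_le_s
  have hw := h.w_le
  have hsw := h.s_le_w
  have ha_nonneg : ∀ m, 0 ≤ level n F σ s w m := fun m =>
    (show level n F σ s w 0 = 0 from if_pos (Nat.zero_le s)) ▸ ha (Nat.zero_le m)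
  have hc0 : #{m ∈ Icc 1 I | σ m ≤ 0} = 0 := card_eq_zero.2 <| filter_eq_empty_iff.2
    fun m hm => by have := (hσ.mapsTo (mem_Icc.1 hm)).1; omega
  have hcK : #{m ∈ Icc 1 I | σ m ≤ K} ≤ I := (card_filter_le _ _).trans (by simp)
  refine ⟨fun k => level n F σ s w (#{m ∈ Icc 1 I | σ m ≤ k} + 1), ?_, fun k _ _ => ?_, ?_, ?_⟩
  · simp only [hc0]
    exact if_pos hs
  · exact ha (Nat.succ_le_succ
      (card_le_card (monotone_filter_right _ fun _ _ h' => h'.trans (k.sub_le 1))))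
  · exact (ha (Nat.succ_le_succ hcK)).trans (by simp [level, show ¬I + 1 ≤ s by omega,
      show w < I + 1 by omega])
  refine Eq.symm ((sum_mul_log_div_eq hP.n_pos hn fun k _ => ha_nonneg _).trans
    ((sum_sub_card_filter hσ.strictMonoOn hσ.mapsTo
      fun k j => F k * log (n k + level n F σ s w (j + 1))).trans ?_))
  rw [← sum_subset (Icc_subset_Icc hs hw) fun m hm hm' => ?_]
  · exact sum_congr rfl fun m hm => by rw [Nat.sub_add_cancel (hs.trans (mem_Icc.1 hm).1)]
  · have : level n F σ s w (m + 1) = level n F σ s w (m - 1 + 1) := by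
      simp only [mem_Icc] at hm hm'
      unfold level
      split_ifs <;> first | rfl | omega
    rw [this, sub_self]

theorem sum_level_eq (h : IsActiveRange n F I σ s w) (hσ : IsDominatingSequence n F K I σ)
    (hP : IsOrderedProfile n F K) :
    ∑ m ∈ Icc s w, (F (σ m) * log (n (σ m) + level n F σ s w (m + 1)) -
      F (σ m) * log (n (σ m) + level n F σ s w m)) =
    F (σ s) * log (F (σ s) / n (σ s)) +
      ∑ m ∈ Icc (s + 1) w, (F (σ m) - F (σ (m - 1))) *
        log ((F (σ m) - F (σ (m - 1))) / (n (σ m) - n (σ (m - 1)))) +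
      F (σ w) * log ((n (σ w) + 1) / F (σ w)) := by
  have hs := h.one_le_s
  have hw := h.w_le
  have hsw := h.s_le_w
  have hmem : ∀ m ∈ Icc s w, m ∈ Set.Icc 1 I := fun m hm => by
    obtain ⟨h₁, h₂⟩ := mem_Icc.1 hm
    exact ⟨by omega, by omega⟩
  have hpred : ∀ m ∈ Icc (s + 1) w, m - 1 ∈ Set.Icc 1 I ∧ m ∈ Set.Icc 1 I ∧ m - 1 < m :=
    fun m hm => by
      obtain ⟨h₁, h₂⟩ := mem_Icc.1 hm
      exact ⟨⟨by omega, by omega⟩, ⟨by omega, by omega⟩, by omega⟩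
  exact sum_mul_log_sub_eq (P := fun m => F (σ m)) (N := fun m => n (σ m)) hsw
    (fun m hm => hσ.F_pos hP (hmem m hm)) (fun m hm => hP.n_pos _ (hσ.mapsTo (hmem m hm)))
    (fun m hm => hσ.F_lt hP (hpred m hm).1 (hpred m hm).2.1 (hpred m hm).2.2)
    (fun m hm => hσ.n_lt hP (hpred m hm).1 (hpred m hm).2.1 (hpred m hm).2.2)
    (if_pos le_rfl) (by simp [level, show ¬w + 1 ≤ s by omega])
    fun m hm => by
      simp only [mem_Icc] at hm
      exact (if_neg (by omega)).trans (if_neg (by omega))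

end IsActiveRange

theorem expected_capacity_one_block_general
    (K I s w : ℕ) (g p : ℕ → ℝ)
    (hg : ∀ k l, 1 ≤ k → k < l → l ≤ K → g l < g k) (hgK : 0 < g K)
    (hp : ∀ k, 1 ≤ k → k ≤ K → 0 < p k)
    (F n : ℕ → ℝ)
    (hF : ∀ k, F k = ∑ j ∈ Finset.Icc 1 k, p j)
    (hn : ∀ k, n k = 1 / g k)
    (σ : ℕ → ℕ)
    (hσ1 : σ 1 = 1) (hσI : σ I = K)
    (hσmono : ∀ i j, 1 ≤ i → i < j → j ≤ I → σ i < σ j)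
    (hmin : ∀ i, 1 ≤ i → i < I → ∀ l, σ i < l → l ≤ K →
      zc n F (σ i) (σ (i + 1)) ≤ zc n F (σ i) l)
    -- `s` is the largest `i ∈ {1,…,I}` with `z_{σ_{i-1},σ_i} ≤ 0`
    -- (convention `z_{σ_0,σ_1} = -n_1 ≤ 0`):
    (hs1 : 1 ≤ s) (hsI : s ≤ I)
    (hsle : s = 1 ∨ zc n F (σ (s - 1)) (σ s) ≤ 0)
    (hsmax : ∀ i, s < i → i ≤ I → 0 < zc n F (σ (i - 1)) (σ i))
    -- `w` is the largest `i ∈ {1,…,I}` with `z_{σ_{i-1},σ_i} < 1`: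
    (hw1 : 1 ≤ w) (hwI : w ≤ I)
    (hwlt : w = 1 ∨ zc n F (σ (w - 1)) (σ w) < 1)
    (hwmax : ∀ i, w < i → i ≤ I → 1 ≤ zc n F (σ (i - 1)) (σ i)) :
    sSup (CexpSet K g F) =
      F (σ s) * Real.log (F (σ s) / n (σ s)) +
      (∑ m ∈ Finset.Icc (s + 1) w,
        (F (σ m) - F (σ (m - 1))) *
          Real.log ((F (σ m) - F (σ (m - 1))) / (n (σ m) - n (σ (m - 1))))) +
      F (σ w) * Real.log ((n (σ w) + 1) / F (σ w)) := by
  have hP := IsOrderedProfile.of_fading hg hgK hp hF hn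
  have hσ : IsDominatingSequence n F K I σ :=
    ⟨hσ1, hσI, fun i hi j hj hij => hσmono i j hi.1 hij hj.2, hmin⟩
  have h : IsActiveRange n F I σ s w := ⟨hs1, hsI, hw1, hwI, hsle, hsmax, hwlt, hwmax⟩
  rw [IsGreatest.csSup_eq
    ⟨h.sum_mem_CexpSet hσ hP hn, fun _ hr => h.le_sum_of_mem_CexpSet hσ hP hn hr⟩]
  exact h.sum_level_eq hσ hP

/-- Explicit expression of the one-block expected capacity in terms of the
active indices `σ_s, …, σ_w` of the dominating marginal utility function. -/
theorem expected_capacity_one_block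
    (K I s w : ℕ) (hK : 1 ≤ K) (g p : ℕ → ℝ)
    (hg : ∀ k l, 1 ≤ k → k < l → l ≤ K → g l < g k) (hgK : 0 < g K)
    (hp : ∀ k, 1 ≤ k → k ≤ K → 0 < p k)
    (hpsum : ∑ k ∈ Finset.Icc 1 K, p k = 1)
    (F n : ℕ → ℝ)
    (hF : ∀ k, F k = ∑ j ∈ Finset.Icc 1 k, p j)
    (hn : ∀ k, n k = 1 / g k)
    (σ : ℕ → ℕ)
    (hI : 1 ≤ I) (hσ1 : σ 1 = 1) (hσI : σ I = K)
    (hσmono : ∀ i j, 1 ≤ i → i < j → j ≤ I → σ i < σ j)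
    (hmin : ∀ i, 1 ≤ i → i < I → ∀ l, σ i < l → l ≤ K →
      zc n F (σ i) (σ (i + 1)) ≤ zc n F (σ i) l)
    (hmax : ∀ i, 1 ≤ i → i < I → ∀ l, σ (i + 1) < l → l ≤ K →
      zc n F (σ i) (σ (i + 1)) < zc n F (σ i) l)
    -- `s` is the largest `i ∈ {1,…,I}` with `z_{σ_{i-1},σ_i} ≤ 0`
    -- (convention `z_{σ_0,σ_1} = -n_1 ≤ 0`):
    (hs1 : 1 ≤ s) (hsI : s ≤ I)
    (hsle : s = 1 ∨ zc n F (σ (s - 1)) (σ s) ≤ 0)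
    (hsmax : ∀ i, s < i → i ≤ I → 0 < zc n F (σ (i - 1)) (σ i))
    -- `w` is the largest `i ∈ {1,…,I}` with `z_{σ_{i-1},σ_i} < 1`:
    (hw1 : 1 ≤ w) (hwI : w ≤ I)
    (hwlt : w = 1 ∨ zc n F (σ (w - 1)) (σ w) < 1)
    (hwmax : ∀ i, w < i → i ≤ I → 1 ≤ zc n F (σ (i - 1)) (σ i)) :
    sSup (CexpSet K g F) =
      F (σ s) * Real.log (F (σ s) / n (σ s)) +
      (∑ m ∈ Finset.Icc (s + 1) w,
        (F (σ m) - F (σ (m - 1))) *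
          Real.log ((F (σ m) - F (σ (m - 1))) / (n (σ m) - n (σ (m - 1))))) +
      F (σ w) * Real.log ((n (σ w) + 1) / F (σ w)) :=
  expected_capacity_one_block_general K I s w g p hg hgK hp F n hF hn σ hσ1 hσI hσmono hmin hs1 hsI
    hsle hsmax hw1 hwI hwlt hwmax
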